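/- arXiv:cs/0508132 — 5 statements merged into one kernel-verified Lean document; each statement's English description precedes it below -/
import Mathlib

section
/- Let Ψ be a general preference and α, β, γ be trajectories. Then: (i) if α ≺_Ψ β and β ≈_Ψ γ then α ≺_Ψ γ; (ii) if α ≺_Ψ β and α ≈_Ψ γ then γ ≺_Ψ β. -/
/-- General preferences over a type `T` of trajectories. -/
inductive GenPref (T : Type) where
  /-- an atomic preference `φ_1 ◁ ⋯ ◁ φ_n`, a finite sequence of basic desires -/
  | atomic : (n : ℕ) → (Fin n → (T → Prop)) → GenPref T
  /-- `Ψ1 & Ψ2` -/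
  | band : GenPref T → GenPref T → GenPref T
  /-- `Ψ1 | Ψ2` -/
  | bor : GenPref T → GenPref T → GenPref T
  /-- `! Ψ1` -/
  | bnot : GenPref T → GenPref T
  /-- the chain `Ψ_1 ◁ ⋯ ◁ Ψ_k` -/
  | chain : (k : ℕ) → (Fin k → GenPref T) → GenPref T

/-- The pair `(≺_Ψ, ≈_Ψ)` of the preferred and indistinguishable relations,
defined by mutual structural recursion on `Ψ`. -/
def GenPref.rel {T : Type} : GenPref T → ((T → T → Prop) × (T → T → Prop))
  | .atomic n φ =>
      (fun α β => ∃ i : Fin n, (φ i α ∧ ¬ φ i β) ∧ ∀ j : Fin n, j < i → (φ j α ↔ φ j β),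
       fun α β => ∀ i : Fin n, φ i α ↔ φ i β)
  | .band Ψ1 Ψ2 =>
      (fun α β => Ψ1.rel.1 α β ∧ Ψ2.rel.1 α β,
       fun α β => Ψ1.rel.2 α β ∧ Ψ2.rel.2 α β)
  | .bor Ψ1 Ψ2 =>
      (fun α β => (Ψ1.rel.1 α β ∧ Ψ2.rel.2 α β) ∨ (Ψ1.rel.2 α β ∧ Ψ2.rel.1 α β) ∨
        (Ψ1.rel.1 α β ∧ Ψ2.rel.1 α β),
       fun α β => Ψ1.rel.2 α β ∧ Ψ2.rel.2 α β)
  | .bnot Ψ1 =>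
      (fun α β => Ψ1.rel.1 β α,
       fun α β => Ψ1.rel.2 α β)
  | .chain k Ψ =>
      (fun α β => ∃ i : Fin k, (Ψ i).rel.1 α β ∧ ∀ j : Fin k, j < i → (Ψ j).rel.2 α β,
       fun α β => ∀ i : Fin k, (Ψ i).rel.2 α β)

/-- `α ≺_Ψ β` : `α` is preferred to `β` w.r.t. the general preference `Ψ`. -/
def GenPref.pref {T : Type} (Ψ : GenPref T) : T → T → Prop := Ψ.rel.1

/-- `α ≈_Ψ β` : `α` and `β` are indistinguishable w.r.t. the general preference `Ψ`. -/
def GenPref.indist {T : Type} (Ψ : GenPref T) : T → T → Prop := Ψ.rel.2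

/-- `α ⪯_Ψ β` iff `α ≺_Ψ β` or `α ≈_Ψ β`. -/
def GenPref.wpref {T : Type} (Ψ : GenPref T) (α β : T) : Prop :=
  Ψ.pref α β ∨ Ψ.indist α β

lemma GenPref.indist_symm {T : Type} (Ψ : GenPref T) :
    ∀ α β : T, Ψ.indist α β → Ψ.indist β α := by
  induction Ψ with
  | atomic n φ => intro α β h i; exact (h i).symm
  | band Ψ1 Ψ2 ih1 ih2 =>
      intro α β h; exact ⟨ih1 _ _ h.1, ih2 _ _ h.2⟩
  | bor Ψ1 Ψ2 ih1 ih2 =>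
      intro α β h; exact ⟨ih1 _ _ h.1, ih2 _ _ h.2⟩
  | bnot Ψ1 ih1 => intro α β h; exact ih1 _ _ h
  | chain k Ψ ih => intro α β h i; exact ih i _ _ (h i)

lemma GenPref.indist_trans {T : Type} (Ψ : GenPref T) :
    ∀ α β γ : T, Ψ.indist α β → Ψ.indist β γ → Ψ.indist α γ := by
  induction Ψ with
  | atomic n φ => intro α β γ h1 h2 i; exact (h1 i).trans (h2 i)
  | band Ψ1 Ψ2 ih1 ih2 =>
      intro α β γ h1 h2; exact ⟨ih1 _ _ _ h1.1 h2.1, ih2 _ _ _ h1.2 h2.2⟩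
  | bor Ψ1 Ψ2 ih1 ih2 =>
      intro α β γ h1 h2; exact ⟨ih1 _ _ _ h1.1 h2.1, ih2 _ _ _ h1.2 h2.2⟩
  | bnot Ψ1 ih1 => intro α β γ h1 h2; exact ih1 _ _ _ h1 h2
  | chain k Ψ ih => intro α β γ h1 h2 i; exact ih i _ _ _ (h1 i) (h2 i)

/-- (i) if `α ≺_Ψ β` and `β ≈_Ψ γ` then `α ≺_Ψ γ`;
(ii) if `α ≺_Ψ β` and `α ≈_Ψ γ` then `γ ≺_Ψ β`. -/
theorem genPref_pref_indist {T : Type} (Ψ : GenPref T) (α β γ : T) :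
    (Ψ.pref α β → Ψ.indist β γ → Ψ.pref α γ) ∧
    (Ψ.pref α β → Ψ.indist α γ → Ψ.pref γ β) := by
  induction Ψ generalizing α β γ with
  | atomic n φ =>
      constructor
      · rintro ⟨i, ⟨ha, hb⟩, hj⟩ h2
        exact ⟨i, ⟨ha, fun hg => hb ((h2 i).mpr hg)⟩,
          fun j hji => (hj j hji).trans (h2 j)⟩
      · rintro ⟨i, ⟨ha, hb⟩, hj⟩ h2
        exact ⟨i, ⟨(h2 i).mp ha, hb⟩,
          fun j hji => (h2 j).symm.trans (hj j hji)⟩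
  | band Ψ1 Ψ2 ih1 ih2 =>
      constructor
      · rintro ⟨p1, p2⟩ ⟨e1, e2⟩
        exact ⟨(ih1 α β γ).1 p1 e1, (ih2 α β γ).1 p2 e2⟩
      · rintro ⟨p1, p2⟩ ⟨e1, e2⟩
        exact ⟨(ih1 α β γ).2 p1 e1, (ih2 α β γ).2 p2 e2⟩
  | bor Ψ1 Ψ2 ih1 ih2 =>
      constructor
      · rintro (⟨p1, p2⟩ | ⟨p1, p2⟩ | ⟨p1, p2⟩) ⟨e1, e2⟩
        · exact Or.inl ⟨(ih1 α β γ).1 p1 e1, Ψ2.indist_trans _ _ _ p2 e2⟩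
        · exact Or.inr (Or.inl ⟨Ψ1.indist_trans _ _ _ p1 e1, (ih2 α β γ).1 p2 e2⟩)
        · exact Or.inr (Or.inr ⟨(ih1 α β γ).1 p1 e1, (ih2 α β γ).1 p2 e2⟩)
      · rintro (⟨p1, p2⟩ | ⟨p1, p2⟩ | ⟨p1, p2⟩) ⟨e1, e2⟩
        · exact Or.inl ⟨(ih1 α β γ).2 p1 e1, Ψ2.indist_trans _ _ _ (Ψ2.indist_symm _ _ e2) p2⟩
        · exact Or.inr (Or.inl ⟨Ψ1.indist_trans _ _ _ (Ψ1.indist_symm _ _ e1) p1, (ih2 α β γ).2 p2 e2⟩)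
        · exact Or.inr (Or.inr ⟨(ih1 α β γ).2 p1 e1, (ih2 α β γ).2 p2 e2⟩)
  | bnot Ψ1 ih1 =>
      exact ⟨fun p e => (ih1 β α γ).2 p e, fun p e => (ih1 β α γ).1 p e⟩
  | chain k Ψ ih =>
      constructor
      · rintro ⟨i, pi, hj⟩ h2
        exact ⟨i, (ih i α β γ).1 pi (h2 i),
          fun j hji => (Ψ j).indist_trans _ _ _ (hj j hji) (h2 j)⟩
      · rintro ⟨i, pi, hj⟩ h2
        exact ⟨i, (ih i α β γ).2 pi (h2 i),
          fun j hji => (Ψ j).indist_trans _ _ _ ((Ψ j).indist_symm _ _ (h2 j)) (hj j hji)⟩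
end

section
/- For every general preference Ψ, the preference relation ≺_Ψ is transitive: for all trajectories α, β, γ, if α ≺_Ψ β and β ≺_Ψ γ then α ≺_Ψ γ. -/
structure GPGood {T : Type} (Ψ : GenPref T) : Prop where
  isymm : ∀ a b, Ψ.rel.2 a b → Ψ.rel.2 b a
  itrans : ∀ a b c, Ψ.rel.2 a b → Ψ.rel.2 b c → Ψ.rel.2 a c
  ptrans : ∀ a b c, Ψ.rel.1 a b → Ψ.rel.1 b c → Ψ.rel.1 a c
  pi : ∀ a b c, Ψ.rel.1 a b → Ψ.rel.2 b c → Ψ.rel.1 a c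
  ip : ∀ a b c, Ψ.rel.2 a b → Ψ.rel.1 b c → Ψ.rel.1 a c

lemma gpgood {T : Type} (Ψ : GenPref T) : GPGood Ψ := by
  induction Ψ with
  | atomic n φ =>
    refine ⟨?_, ?_, ?_, ?_, ?_⟩ <;> simp only [GenPref.rel]
    · intro a b h i; exact (h i).symm
    · intro a b c h1 h2 i; exact (h1 i).trans (h2 i)
    · rintro a b c ⟨i, ⟨ha, hb⟩, hlt⟩ ⟨i', ⟨hb', hc'⟩, hlt'⟩
      rcases lt_trichotomy i i' with hii | hii | hii
      · exact ⟨i, ⟨ha, fun h => hb ((hlt' i hii).mpr h)⟩,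
          fun j hj => (hlt j hj).trans (hlt' j (hj.trans hii))⟩
      · subst hii; exact absurd hb' hb
      · exact ⟨i', ⟨(hlt i' hii).mpr hb', hc'⟩,
          fun j hj => (hlt j (hj.trans hii)).trans (hlt' j hj)⟩
    · rintro a b c ⟨i, ⟨ha, hb⟩, hlt⟩ h2
      exact ⟨i, ⟨ha, fun h => hb ((h2 i).mpr h)⟩, fun j hj => (hlt j hj).trans (h2 j)⟩
    · rintro a b c h1 ⟨i, ⟨hb, hc⟩, hlt⟩
      exact ⟨i, ⟨(h1 i).mpr hb, hc⟩, fun j hj => (h1 j).trans (hlt j hj)⟩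
  | band Ψ1 Ψ2 g1 g2 =>
    refine ⟨?_, ?_, ?_, ?_, ?_⟩ <;> simp only [GenPref.rel]
    · rintro a b ⟨x1, x2⟩; exact ⟨g1.isymm _ _ x1, g2.isymm _ _ x2⟩
    · rintro a b c ⟨x1, x2⟩ ⟨y1, y2⟩
      exact ⟨g1.itrans _ _ _ x1 y1, g2.itrans _ _ _ x2 y2⟩
    · rintro a b c ⟨x1, x2⟩ ⟨y1, y2⟩
      exact ⟨g1.ptrans _ _ _ x1 y1, g2.ptrans _ _ _ x2 y2⟩
    · rintro a b c ⟨x1, x2⟩ ⟨y1, y2⟩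
      exact ⟨g1.pi _ _ _ x1 y1, g2.pi _ _ _ x2 y2⟩
    · rintro a b c ⟨x1, x2⟩ ⟨y1, y2⟩
      exact ⟨g1.ip _ _ _ x1 y1, g2.ip _ _ _ x2 y2⟩
  | bor Ψ1 Ψ2 g1 g2 =>
    refine ⟨?_, ?_, ?_, ?_, ?_⟩ <;> simp only [GenPref.rel]
    · rintro a b ⟨x1, x2⟩; exact ⟨g1.isymm _ _ x1, g2.isymm _ _ x2⟩
    · rintro a b c ⟨x1, x2⟩ ⟨y1, y2⟩
      exact ⟨g1.itrans _ _ _ x1 y1, g2.itrans _ _ _ x2 y2⟩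
    · rintro a b c (⟨p1, i2⟩ | ⟨i1, p2⟩ | ⟨p1, p2⟩) (⟨p1', i2'⟩ | ⟨i1', p2'⟩ | ⟨p1', p2'⟩)
      · exact Or.inl ⟨g1.ptrans _ _ _ p1 p1', g2.itrans _ _ _ i2 i2'⟩
      · exact Or.inr (Or.inr ⟨g1.pi _ _ _ p1 i1', g2.ip _ _ _ i2 p2'⟩)
      · exact Or.inr (Or.inr ⟨g1.ptrans _ _ _ p1 p1', g2.ip _ _ _ i2 p2'⟩)
      · exact Or.inr (Or.inr ⟨g1.ip _ _ _ i1 p1', g2.pi _ _ _ p2 i2'⟩)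
      · exact Or.inr (Or.inl ⟨g1.itrans _ _ _ i1 i1', g2.ptrans _ _ _ p2 p2'⟩)
      · exact Or.inr (Or.inr ⟨g1.ip _ _ _ i1 p1', g2.ptrans _ _ _ p2 p2'⟩)
      · exact Or.inr (Or.inr ⟨g1.ptrans _ _ _ p1 p1', g2.pi _ _ _ p2 i2'⟩)
      · exact Or.inr (Or.inr ⟨g1.pi _ _ _ p1 i1', g2.ptrans _ _ _ p2 p2'⟩)
      · exact Or.inr (Or.inr ⟨g1.ptrans _ _ _ p1 p1', g2.ptrans _ _ _ p2 p2'⟩)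
    · rintro a b c (⟨p1, i2⟩ | ⟨i1, p2⟩ | ⟨p1, p2⟩) ⟨i1', i2'⟩
      · exact Or.inl ⟨g1.pi _ _ _ p1 i1', g2.itrans _ _ _ i2 i2'⟩
      · exact Or.inr (Or.inl ⟨g1.itrans _ _ _ i1 i1', g2.pi _ _ _ p2 i2'⟩)
      · exact Or.inr (Or.inr ⟨g1.pi _ _ _ p1 i1', g2.pi _ _ _ p2 i2'⟩)
    · rintro a b c ⟨i1, i2⟩ (⟨p1', i2'⟩ | ⟨i1', p2'⟩ | ⟨p1', p2'⟩)
      · exact Or.inl ⟨g1.ip _ _ _ i1 p1', g2.itrans _ _ _ i2 i2'⟩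
      · exact Or.inr (Or.inl ⟨g1.itrans _ _ _ i1 i1', g2.ip _ _ _ i2 p2'⟩)
      · exact Or.inr (Or.inr ⟨g1.ip _ _ _ i1 p1', g2.ip _ _ _ i2 p2'⟩)
  | bnot Ψ1 g1 =>
    refine ⟨?_, ?_, ?_, ?_, ?_⟩ <;> simp only [GenPref.rel]
    · exact fun a b => g1.isymm a b
    · exact fun a b c => g1.itrans a b c
    · intro a b c h1 h2; exact g1.ptrans _ _ _ h2 h1
    · intro a b c h1 h2; exact g1.ip _ _ _ (g1.isymm _ _ h2) h1
    · intro a b c h1 h2; exact g1.pi _ _ _ h2 (g1.isymm _ _ h1)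
  | chain k Ψ ih =>
    refine ⟨?_, ?_, ?_, ?_, ?_⟩ <;> simp only [GenPref.rel]
    · intro a b h i; exact (ih i).isymm _ _ (h i)
    · intro a b c h1 h2 i; exact (ih i).itrans _ _ _ (h1 i) (h2 i)
    · rintro a b c ⟨i, hp, hlt⟩ ⟨i', hp', hlt'⟩
      rcases lt_trichotomy i i' with hii | hii | hii
      · exact ⟨i, (ih i).pi _ _ _ hp (hlt' i hii),
          fun j hj => (ih j).itrans _ _ _ (hlt j hj) (hlt' j (hj.trans hii))⟩
      · subst hii; exact ⟨i, (ih i).ptrans _ _ _ hp hp',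
          fun j hj => (ih j).itrans _ _ _ (hlt j hj) (hlt' j hj)⟩
      · exact ⟨i', (ih i').ip _ _ _ (hlt i' hii) hp',
          fun j hj => (ih j).itrans _ _ _ (hlt j (hj.trans hii)) (hlt' j hj)⟩
    · rintro a b c ⟨i, hp, hlt⟩ h2
      exact ⟨i, (ih i).pi _ _ _ hp (h2 i), fun j hj => (ih j).itrans _ _ _ (hlt j hj) (h2 j)⟩
    · rintro a b c h1 ⟨i, hp, hlt⟩
      exact ⟨i, (ih i).ip _ _ _ (h1 i) hp, fun j hj => (ih j).itrans _ _ _ (h1 j) (hlt j hj)⟩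

/-- For every general preference `Ψ`, the relation `≺_Ψ` is transitive. -/
theorem genPref_pref_trans {T : Type} (Ψ : GenPref T) (α β γ : T)
    (h1 : Ψ.pref α β) (h2 : Ψ.pref β γ) : Ψ.pref α γ :=
  (gpgood Ψ).ptrans α β γ h1 h2
end

section
/- For every general preference Ψ, the relation ⪯_Ψ is a partial order on trajectories modulo ≈_Ψ: (i) reflexivity: α ⪯_Ψ α for every trajectory α; (ii) antisymmetry up to indistinguishability: if α ⪯_Ψ β and β ⪯_Ψ α then α ≈_Ψ β; (iii) transitivity: if α ⪯_Ψ β and β ⪯_Ψ γ then α ⪯_Ψ γ. -/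
section Aux
variable {T : Type}

structure IsGood (P E : T → T → Prop) : Prop where
  refl : ∀ α, E α α
  symm : ∀ {α β}, E α β → E β α
  transE : ∀ {α β γ}, E α β → E β γ → E α γ
  transP : ∀ {α β γ}, P α β → P β γ → P α γ
  compat1 : ∀ {α β γ}, P α β → E β γ → P α γ
  compat2 : ∀ {α β γ}, E α β → P β γ → P α γ
  asym : ∀ {α β}, P α β → ¬ P β α

namespace IsGood

variable {P E P1 E1 P2 E2 : T → T → Prop}

lemma notBoth (h : IsGood P E) {α β} (hp : P α β) (he : E α β) : False :=
  h.asym (h.compat2 (h.symm he) hp) (h.compat2 (h.symm he) hp)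

lemma wtrans (h : IsGood P E) {α β γ} (h1 : P α β ∨ E α β) (h2 : P β γ ∨ E β γ) :
    P α γ ∨ E α γ := by
  rcases h1 with h1 | h1 <;> rcases h2 with h2 | h2
  · exact Or.inl (h.transP h1 h2)
  · exact Or.inl (h.compat1 h1 h2)
  · exact Or.inl (h.compat2 h1 h2)
  · exact Or.inr (h.transE h1 h2)

lemma pw (h : IsGood P E) {α β γ} (h1 : P α β) (h2 : P β γ ∨ E β γ) : P α γ := by
  rcases h2 with h2 | h2
  · exact h.transP h1 h2
  · exact h.compat1 h1 h2

lemma wp (h : IsGood P E) {α β γ} (h1 : P α β ∨ E α β) (h2 : P β γ) : P α γ := by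
  rcases h1 with h1 | h1
  · exact h.transP h1 h2
  · exact h.compat2 h1 h2

lemma wasym (h : IsGood P E) {α β} (hp : P α β) (hw : P β α ∨ E β α) : False := by
  rcases hw with hw | hw
  · exact h.asym hp hw
  · exact h.notBoth hp (h.symm hw)

lemma band (h1 : IsGood P1 E1) (h2 : IsGood P2 E2) :
    IsGood (fun α β => P1 α β ∧ P2 α β) (fun α β => E1 α β ∧ E2 α β) where
  refl α := ⟨h1.refl α, h2.refl α⟩
  symm h := ⟨h1.symm h.1, h2.symm h.2⟩
  transE ha hb := ⟨h1.transE ha.1 hb.1, h2.transE ha.2 hb.2⟩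
  transP ha hb := ⟨h1.transP ha.1 hb.1, h2.transP ha.2 hb.2⟩
  compat1 ha hb := ⟨h1.compat1 ha.1 hb.1, h2.compat1 ha.2 hb.2⟩
  compat2 ha hb := ⟨h1.compat2 ha.1 hb.1, h2.compat2 ha.2 hb.2⟩
  asym ha hb := h1.asym ha.1 hb.1

lemma bnot (h : IsGood P E) : IsGood (fun α β => P β α) E where
  refl := h.refl
  symm := h.symm
  transE := h.transE
  transP ha hb := h.transP hb ha
  compat1 ha hb := h.compat2 (h.symm hb) ha
  compat2 ha hb := h.compat1 hb (h.symm ha)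
  asym ha hb := h.asym ha hb

lemma bor_char {α β : T} :
    ((P1 α β ∧ E2 α β) ∨ (E1 α β ∧ P2 α β) ∨ (P1 α β ∧ P2 α β)) ↔
    ((P1 α β ∨ E1 α β) ∧ (P2 α β ∨ E2 α β) ∧ (P1 α β ∨ P2 α β)) := by
  tauto

lemma bor (h1 : IsGood P1 E1) (h2 : IsGood P2 E2) :
    IsGood (fun α β => (P1 α β ∧ E2 α β) ∨ (E1 α β ∧ P2 α β) ∨ (P1 α β ∧ P2 α β))
           (fun α β => E1 α β ∧ E2 α β) where
  refl α := ⟨h1.refl α, h2.refl α⟩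
  symm h := ⟨h1.symm h.1, h2.symm h.2⟩
  transE ha hb := ⟨h1.transE ha.1 hb.1, h2.transE ha.2 hb.2⟩
  transP {α β γ} ha hb := by
    rw [bor_char] at ha hb ⊢
    refine ⟨h1.wtrans ha.1 hb.1, h2.wtrans ha.2.1 hb.2.1, ?_⟩
    rcases ha.2.2 with hp | hp
    · exact Or.inl (h1.pw hp hb.1)
    · exact Or.inr (h2.pw hp hb.2.1)
  compat1 {α β γ} ha hb := by
    rw [bor_char] at ha ⊢
    refine ⟨h1.wtrans ha.1 (Or.inr hb.1), h2.wtrans ha.2.1 (Or.inr hb.2), ?_⟩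
    rcases ha.2.2 with hp | hp
    · exact Or.inl (h1.compat1 hp hb.1)
    · exact Or.inr (h2.compat1 hp hb.2)
  compat2 {α β γ} ha hb := by
    rw [bor_char] at hb ⊢
    refine ⟨h1.wtrans (Or.inr ha.1) hb.1, h2.wtrans (Or.inr ha.2) hb.2.1, ?_⟩
    rcases hb.2.2 with hp | hp
    · exact Or.inl (h1.compat2 ha.1 hp)
    · exact Or.inr (h2.compat2 ha.2 hp)
  asym {α β} ha hb := by
    rw [bor_char] at ha hb
    rcases ha.2.2 with hp | hp
    · exact h1.wasym hp hb.1
    · exact h2.wasym hp hb.2.1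

lemma chain {k : ℕ} (P E : Fin k → T → T → Prop) (h : ∀ i, IsGood (P i) (E i)) :
    IsGood (fun α β => ∃ i : Fin k, P i α β ∧ ∀ j : Fin k, j < i → E j α β)
           (fun α β => ∀ i : Fin k, E i α β) where
  refl α i := (h i).refl α
  symm he i := (h i).symm (he i)
  transE ha hb i := (h i).transE (ha i) (hb i)
  transP {α β γ} := by
    rintro ⟨i, hPi, hEi⟩ ⟨i', hPi', hEi'⟩
    rcases lt_trichotomy i i' with hii | hii | hii
    · exact ⟨i, (h i).compat1 hPi (hEi' i hii),
        fun j hj => (h j).transE (hEi j hj) (hEi' j (hj.trans hii))⟩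
    · subst hii
      exact ⟨i, (h i).transP hPi hPi', fun j hj => (h j).transE (hEi j hj) (hEi' j hj)⟩
    · exact ⟨i', (h i').compat2 (hEi i' hii) hPi',
        fun j hj => (h j).transE (hEi j (hj.trans hii)) (hEi' j hj)⟩
  compat1 {α β γ} := by
    rintro ⟨i, hPi, hEi⟩ he
    exact ⟨i, (h i).compat1 hPi (he i), fun j hj => (h j).transE (hEi j hj) (he j)⟩
  compat2 {α β γ} := by
    rintro he ⟨i, hPi, hEi⟩
    exact ⟨i, (h i).compat2 (he i) hPi, fun j hj => (h j).transE (he j) (hEi j hj)⟩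
  asym {α β} := by
    rintro ⟨i, hPi, hEi⟩ ⟨i', hPi', hEi'⟩
    rcases lt_trichotomy i i' with hii | hii | hii
    · exact (h i).notBoth hPi ((h i).symm (hEi' i hii))
    · subst hii; exact (h i).asym hPi hPi'
    · exact (h i').notBoth hPi' ((h i').symm (hEi i' hii))

end IsGood

lemma isGood_single (φ : T → Prop) :
    IsGood (fun α β => φ α ∧ ¬ φ β) (fun α β => φ α ↔ φ β) where
  refl _ := Iff.rfl
  symm h := h.symm
  transE ha hb := ha.trans hb
  transP ha hb := (ha.2 hb.1).elim
  compat1 ha hb := ⟨ha.1, fun hc => ha.2 (hb.mpr hc)⟩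
  compat2 ha hb := ⟨ha.mpr hb.1, hb.2⟩
  asym ha hb := ha.2 hb.1

lemma genPref_good (Ψ : GenPref T) : IsGood Ψ.pref Ψ.indist := by
  induction Ψ with
  | atomic n φ => exact IsGood.chain _ _ (fun i => isGood_single (φ i))
  | band Ψ1 Ψ2 ih1 ih2 => exact ih1.band ih2
  | bor Ψ1 Ψ2 ih1 ih2 => exact ih1.bor ih2
  | bnot Ψ1 ih => exact ih.bnot
  | chain k Ψ ih => exact IsGood.chain _ _ ih

end Aux

/-- For every general preference `Ψ`, `⪯_Ψ` is a partial order modulo `≈_Ψ`: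
reflexive, antisymmetric up to indistinguishability, and transitive. -/
theorem genPref_wpref_partialOrder {T : Type} (Ψ : GenPref T) :
    (∀ α : T, Ψ.wpref α α) ∧
    (∀ α β : T, Ψ.wpref α β → Ψ.wpref β α → Ψ.indist α β) ∧
    (∀ α β γ : T, Ψ.wpref α β → Ψ.wpref β γ → Ψ.wpref α γ) := by
  obtain ⟨hrefl, hsymm, htransE, htransP, hc1, hc2, hasym⟩ := genPref_good Ψ
  refine ⟨fun α => Or.inr (hrefl α), ?_, ?_⟩
  · rintro α β (h1 | h1) (h2 | h2)
    · exact (hasym h1 h2).elim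
    · exact (hasym (hc1 h1 h2) (hc1 h1 h2)).elim
    · exact (hasym (hc2 h1 h2) (hc2 h1 h2)).elim
    · exact hsymm h2
  · rintro α β γ (h1 | h1) (h2 | h2)
    · exact Or.inl (htransP h1 h2)
    · exact Or.inl (hc1 h1 h2)
    · exact Or.inl (hc2 h1 h2)
    · exact Or.inr (htransE h1 h2)
end

section
/- Chaining of general preferences is associative in the following sense: let Ψ1, Ψ2, Ψ3 be general preferences, let Ψ be the three-element chain Ψ1 ◁ Ψ2 ◁ Ψ3, and let Γ be the two-element chain Ψ1 ◁ (Ψ2 ◁ Ψ3), where Ψ2 ◁ Ψ3 is itself a two-element chain. Then for all trajectories α and β: α ≈_Ψ β if and only if α ≈_Γ β, and α ≺_Ψ β if and only if α ≺_Γ β. -/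
/-- Chaining of general preferences is associative: with
`Ψ = Ψ1 ◁ Ψ2 ◁ Ψ3` and `Γ = Ψ1 ◁ (Ψ2 ◁ Ψ3)`, we have
`α ≈_Ψ β ↔ α ≈_Γ β` and `α ≺_Ψ β ↔ α ≺_Γ β`. -/
theorem genPref_chain_assoc {T : Type} (Ψ1 Ψ2 Ψ3 : GenPref T) (α β : T) :
    ((GenPref.chain 3 ![Ψ1, Ψ2, Ψ3]).indist α β ↔
      (GenPref.chain 2 ![Ψ1, GenPref.chain 2 ![Ψ2, Ψ3]]).indist α β) ∧
    ((GenPref.chain 3 ![Ψ1, Ψ2, Ψ3]).pref α β ↔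
      (GenPref.chain 2 ![Ψ1, GenPref.chain 2 ![Ψ2, Ψ3]]).pref α β) := by
  simp only [GenPref.indist, GenPref.pref, GenPref.rel, Fin.forall_fin_succ, Fin.exists_fin_succ,
    Fin.forall_fin_zero_pi, Matrix.cons_val_zero, Matrix.cons_val_one, Matrix.head_cons,
    Matrix.cons_val_succ, IsEmpty.forall_iff, and_true, Fin.succ_lt_succ_iff, Fin.not_lt_zero,
    false_implies, forall_const, Fin.succ_pos, Fin.lt_irrefl]
  constructor
  · tauto
  · constructor
    · tauto
    · tauto
end

section
/- Let Ψ = φ_1 ◁ ⋯ ◁ φ_k be an atomic preference and let α, β be trajectories. Then α ≺_Ψ β if and only if w_Ψ(α) > w_Ψ(β), and α ≈_Ψ β if and only if w_Ψ(α) = w_Ψ(β). -/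
/-- `α ≈_Ψ β` for an atomic preference `Ψ = φ_1 ◁ ⋯ ◁ φ_k`. -/
def AtomicPref.indist {T : Type} {k : ℕ} (φ : Fin k → T → Prop) (α β : T) : Prop :=
  ∀ i : Fin k, φ i α ↔ φ i β

/-- `α ≺_Ψ β` for an atomic preference `Ψ = φ_1 ◁ ⋯ ◁ φ_k`. -/
def AtomicPref.prec {T : Type} {k : ℕ} (φ : Fin k → T → Prop) (α β : T) : Prop :=
  ∃ i : Fin k, (φ i α ∧ ¬ φ i β) ∧ ∀ j : Fin k, j < i → (φ j α ↔ φ j β)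

open Classical in
/-- The weight of a trajectory w.r.t. a basic desire `φ`: 1 if satisfied, 0 otherwise. -/
noncomputable def basicWeight {T : Type} (φ : T → Prop) (α : T) : ℕ :=
  if φ α then 1 else 0

/-- The weight of a trajectory `α` w.r.t. an atomic preference `Ψ = φ_1 ◁ ⋯ ◁ φ_k`:
`w_Ψ(α) = Σ_{r=1}^{k} 2^{k−r} · w_{φ_r}(α)` (index `i : Fin k` corresponds to `r = i+1`). -/
noncomputable def atomicWeight {T : Type} {k : ℕ} (φ : Fin k → T → Prop) (α : T) : ℕ :=
  ∑ i : Fin k, 2 ^ (k - (i.val + 1)) * basicWeight (φ i) α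

/-!
Read the weights `w_{φ_1}(α), …, w_{φ_k}(α)` as the binary digits of `w_Ψ(α)`, most significant
first. Peeling off `φ_1`, we get `w_Ψ(α) = 2^(k-1) · w_{φ_1}(α) + w_{Ψ'}(α)` with
`Ψ' = φ_2 ◁ ⋯ ◁ φ_k` and `w_{Ψ'}(α) < 2^(k-1)`, so comparing weights compares the leading digits
first and the remaining weights only on a tie. The relations `≺_Ψ` and `≈_Ψ` unfold in exactly the
same way, and induction on `k` concludes.
-/

section Digits

variable {p a b x y : ℕ}

theorem mul_add_lt_mul_add_iff_of_lt (hx : x < p) (hy : y < p) :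
    p * a + x < p * b + y ↔ a < b ∨ a = b ∧ x < y := by
  rcases lt_trichotomy a b with hab | rfl | hab
  · have : p * a + x < p * b + y :=
      calc p * a + x < p * (a + 1) := by rw [mul_add_one]; omega
        _ ≤ p * b := Nat.mul_le_mul_left p hab
        _ ≤ p * b + y := Nat.le_add_right _ _
    simp [this, hab]
  · simp
  · have : p * b + y < p * a + x :=
      calc p * b + y < p * (b + 1) := by rw [mul_add_one]; omega
        _ ≤ p * a := Nat.mul_le_mul_left p hab
        _ ≤ p * a + x := Nat.le_add_right _ _
    simp [this.le.not_gt, hab.not_gt, hab.ne']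

theorem mul_add_eq_mul_add_iff_of_lt (hx : x < p) (hy : y < p) :
    p * a + x = p * b + y ↔ a = b ∧ x = y := by
  rw [le_antisymm_iff, ← not_lt, ← not_lt, mul_add_lt_mul_add_iff_of_lt hx hy,
    mul_add_lt_mul_add_iff_of_lt hy hx]
  omega

end Digits

section BasicWeight

variable {T : Type} (φ : T → Prop) (α β : T)

theorem basicWeight_le_one : basicWeight φ α ≤ 1 := by
  unfold basicWeight
  split <;> omega

theorem basicWeight_lt_basicWeight_iff : basicWeight φ β < basicWeight φ α ↔ φ α ∧ ¬φ β := by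
  unfold basicWeight
  by_cases hα : φ α <;> by_cases hβ : φ β <;> simp [hα, hβ]

theorem basicWeight_eq_basicWeight_iff : basicWeight φ α = basicWeight φ β ↔ (φ α ↔ φ β) := by
  unfold basicWeight
  by_cases hα : φ α <;> by_cases hβ : φ β <;> simp [hα, hβ]

end BasicWeight

section Succ

variable {T : Type} {k : ℕ} (φ : Fin (k + 1) → T → Prop) (α β : T)

theorem atomicWeight_succ :
    atomicWeight φ α = 2 ^ k * basicWeight (φ 0) α + atomicWeight (Fin.tail φ) α := by
  unfold atomicWeight
  rw [Fin.sum_univ_succ]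
  simp only [Fin.val_zero, Fin.val_succ, Fin.tail, zero_add, Nat.add_sub_cancel,
    Nat.add_sub_add_right]

theorem AtomicPref.prec_succ_iff :
    AtomicPref.prec φ α β ↔
      (φ 0 α ∧ ¬φ 0 β) ∨ ((φ 0 α ↔ φ 0 β) ∧ AtomicPref.prec (Fin.tail φ) α β) := by
  simp only [AtomicPref.prec, Fin.exists_fin_succ, Fin.forall_fin_succ, Fin.succ_lt_succ_iff,
    Fin.succ_pos, Fin.not_lt_zero, IsEmpty.forall_iff, implies_true, and_true, forall_const,
    Fin.tail]
  exact or_congr_right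
    ⟨fun ⟨i, hi, h0, h⟩ => ⟨h0, i, hi, h⟩, fun ⟨h0, i, hi, h⟩ => ⟨i, hi, h0, h⟩⟩

theorem AtomicPref.indist_succ_iff :
    AtomicPref.indist φ α β ↔ (φ 0 α ↔ φ 0 β) ∧ AtomicPref.indist (Fin.tail φ) α β :=
  Fin.forall_fin_succ

end Succ

section Characterization

variable {T : Type} {k : ℕ} (φ : Fin k → T → Prop) (α β : T)

theorem atomicWeight_lt_two_pow : atomicWeight φ α < 2 ^ k := by
  induction k with
  | zero => simp [atomicWeight]
  | succ k ih =>
    have hlead := basicWeight_le_one (φ 0) α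
    have htail := ih (Fin.tail φ)
    calc atomicWeight φ α = 2 ^ k * basicWeight (φ 0) α + atomicWeight (Fin.tail φ) α :=
          atomicWeight_succ φ α
      _ < 2 ^ k * 1 + 2 ^ k := add_lt_add_of_le_of_lt (Nat.mul_le_mul_left _ hlead) htail
      _ = 2 ^ (k + 1) := by ring

theorem AtomicPref.prec_iff_atomicWeight_lt :
    AtomicPref.prec φ α β ↔ atomicWeight φ β < atomicWeight φ α := by
  induction k with
  | zero => simp [AtomicPref.prec, atomicWeight]
  | succ k ih =>
    rw [AtomicPref.prec_succ_iff, atomicWeight_succ, atomicWeight_succ,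
      mul_add_lt_mul_add_iff_of_lt (atomicWeight_lt_two_pow _ β) (atomicWeight_lt_two_pow _ α),
      ih, basicWeight_lt_basicWeight_iff, eq_comm, basicWeight_eq_basicWeight_iff]

theorem AtomicPref.indist_iff_atomicWeight_eq :
    AtomicPref.indist φ α β ↔ atomicWeight φ α = atomicWeight φ β := by
  induction k with
  | zero => simp [AtomicPref.indist, atomicWeight]
  | succ k ih =>
    rw [AtomicPref.indist_succ_iff, atomicWeight_succ, atomicWeight_succ,
      mul_add_eq_mul_add_iff_of_lt (atomicWeight_lt_two_pow _ α) (atomicWeight_lt_two_pow _ β),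
      ih, basicWeight_eq_basicWeight_iff]

end Characterization

/-- Let `Ψ = φ_1 ◁ ⋯ ◁ φ_k` be an atomic preference. Then `α ≺_Ψ β` iff
`w_Ψ(α) > w_Ψ(β)`, and `α ≈_Ψ β` iff `w_Ψ(α) = w_Ψ(β)`. -/
theorem atomicWeight_characterization {T : Type} {k : ℕ} (φ : Fin k → T → Prop)
    (α β : T) :
    (AtomicPref.prec φ α β ↔ atomicWeight φ α > atomicWeight φ β) ∧
    (AtomicPref.indist φ α β ↔ atomicWeight φ α = atomicWeight φ β) :=
  ⟨AtomicPref.prec_iff_atomicWeight_lt φ α β, AtomicPref.indist_iff_atomicWeight_eq φ α β⟩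
end
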